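/- arXiv:2505.19646 — 2 statements merged into one kernel-verified Lean document; each statement's English description precedes it below -/
import Mathlib

section
/- For the conditional OT path with backward kernel p_{t|r}(x_t|x_r) = N(x_t; (t/r)x_r, σ_t I) where σ_t = (1−t)² − (t²/r²)(1−r)², and conditional velocity u_{t|r}(x_t|x_r) = (1/r)x_r + (σ̇_t/(2σ_t))(x_t − (t/r)x_r), the marginal consistency holds: E_{x_r ∼ p_{r|1,t}(·|x₁,x_t)}[u_{t|r}(x_t|x_r)] = (x₁ − x_t)/(1−t) = u_{t|1}(x_t|x₁), where p_{r|1,t} is the Gaussian posterior with mean μ_{r|1,t}(x₁,x_t) = (t(1−r)²/(r(1−t)²)) x_t + (rσ_t/(1−t)²) x₁. -/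
open MeasureTheory

/-! The conditional velocity `u_{t|r}(x_t | ·)` is affine in `x_r` with slope `(1 - t) / (σ_t r)`,
so its posterior expectation is its value at the posterior mean, and what remains is an identity
between the scalar coefficients of `x₁` and `x_t`. -/

theorem integral_smul_add_const {α E : Type*} [MeasurableSpace α] [NormedAddCommGroup E]
    [NormedSpace ℝ E] [CompleteSpace E] {μ : Measure α} [IsProbabilityMeasure μ] {f : α → E}
    (hf : Integrable f μ) (a : ℝ) (b : E) :
    ∫ x, (a • f x + b) ∂μ = a • ∫ x, f x ∂μ + b := by
  rw [integral_add (by exact hf.smul a) (integrable_const b), integral_smul, integral_const,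
    probReal_univ, one_smul]

section Coefficients

variable {t r σ σ' : ℝ}

theorem condOT_velocity_slope_eq (hr : r ≠ 0) (hσ0 : σ ≠ 0)
    (hσ : σ = (1 - t) ^ 2 - (t ^ 2 / r ^ 2) * (1 - r) ^ 2)
    (hσ' : σ' = -2 * (1 - t) - (2 * t / r ^ 2) * (1 - r) ^ 2) :
    1 / r - σ' / (2 * σ) * (t / r) = (1 - t) / (σ * r) := by
  have hσt : 2 * σ - σ' * t = 2 * (1 - t) := by
    subst hσ hσ'
    field_simp
    ring
  field_simp
  linear_combination hσt

theorem condOT_coeff_x_t_eq (hr : r ≠ 0) (ht : 1 - t ≠ 0) (hσ0 : σ ≠ 0)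
    (hσ : σ = (1 - t) ^ 2 - (t ^ 2 / r ^ 2) * (1 - r) ^ 2)
    (hσ' : σ' = -2 * (1 - t) - (2 * t / r ^ 2) * (1 - r) ^ 2) :
    (1 - t) / (σ * r) * (t * (1 - r) ^ 2 / (r * (1 - t) ^ 2)) + σ' / (2 * σ)
      = -(1 / (1 - t)) := by
  have hσr : r ^ 2 * σ = r ^ 2 * (1 - t) ^ 2 - t ^ 2 * (1 - r) ^ 2 := by
    subst hσ
    field_simp
  subst hσ'
  field_simp
  linear_combination hσr

end Coefficients

/-- For the conditional OT path with backward kernel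
`p_{t|r}(x_t|x_r) = N(x_t; (t/r)x_r, σ_t I)` and conditional velocity
`u_{t|r}(x_t|x_r) = (1/r)x_r + (σ̇_t/(2σ_t))(x_t − (t/r)x_r)`, the posterior expectation of
the conditional velocity recovers the conditional OT velocity:
`E_{x_r ∼ p_{r|1,t}(·|x₁,x_t)}[u_{t|r}(x_t|x_r)] = (x₁ − x_t)/(1−t)`, where the Gaussian
posterior has mean `μ_{r|1,t}(x₁,x_t) = (t(1−r)²/(r(1−t)²)) x_t + (rσ_t/(1−t)²) x₁`. -/
theorem condOT_velocity_marginal_consistency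
    (d : ℕ) (t r : ℝ) (ht : 0 < t) (htr : t < r) (hr : r < 1)
    (x₁ x_t : Fin d → ℝ)
    (σ σ' : ℝ)
    (hσ : σ = (1 - t) ^ 2 - (t ^ 2 / r ^ 2) * (1 - r) ^ 2)
    (hσ' : σ' = -2 * (1 - t) - (2 * t / r ^ 2) * (1 - r) ^ 2)
    (hσpos : 0 < σ)
    -- the Gaussian posterior p_{r|1,t}(·|x₁,x_t), given as a probability measure with the
    -- stated mean
    (P : Measure (Fin d → ℝ)) [IsProbabilityMeasure P]
    (hPint : Integrable (fun x_r : Fin d → ℝ => x_r) P)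
    (hPmean : ∫ x_r, x_r ∂P =
      (t * (1 - r) ^ 2 / (r * (1 - t) ^ 2)) • x_t + (r * σ / (1 - t) ^ 2) • x₁) :
    ∫ x_r, ((1 / r) • x_r + (σ' / (2 * σ)) • (x_t - (t / r) • x_r)) ∂P =
      (1 / (1 - t)) • (x₁ - x_t) := by
  have hr0 : r ≠ 0 := by linarith
  have h1t : 1 - t ≠ 0 := by linarith
  have hσ0 : σ ≠ 0 := hσpos.ne'
  have hslope := condOT_velocity_slope_eq hr0 hσ0 hσ hσ'
  have hx_t := condOT_coeff_x_t_eq hr0 h1t hσ0 hσ hσ'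
  have hx₁ : (1 - t) / (σ * r) * (r * σ / (1 - t) ^ 2) = 1 / (1 - t) := by
    field_simp
  have haffine : (fun x_r : Fin d → ℝ => (1 / r) • x_r + (σ' / (2 * σ)) • (x_t - (t / r) • x_r))
      = fun x_r => ((1 - t) / (σ * r)) • x_r + (σ' / (2 * σ)) • x_t := by
    funext x_r
    rw [← hslope]
    module
  rw [haffine, integral_smul_add_const hPint, hPmean]
  linear_combination (norm := module) hx_t • x_t + hx₁ • x₁
end

section
/- For the masked diffusion path on a finite set S with mask token M, with conditional probability path p_{t|1}(x|x₁) = κ_t δ_{x₁}(x) + (1−κ_t)δ_M(x) and backward kernel p_{t|r}(x_t|x_r) = (κ_t/κ_r)δ_{x_r}(x_t) + (1−κ_t/κ_r)δ_M(x_t), the conditional rate matrices u_{t|r}(y,x|x_r) = (κ̇_t/(κ_r−κ_t))(δ_{x_r}(y) − δ_x(y)) satisfy the marginal consistency: for any x₁ ≠ M and any x_t in the support of p_{t|1}(·|x₁), E_{x_r ∼ p_{r|1,t}(·|x₁,x_t)}[u_{t|r}(y, x_t|x_r)] = (κ̇_t/(1−κ_t))(δ_{x₁}(y) − δ_{x_t}(y))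 = u_{t|1}(y, x_t|x₁) for all y ∈ S, where p_{r|1,t}(x_r|x₁,x_t) = p_{t|r}(x_t|x_r)p_{r|1}(x_r|x₁)/p_{t|1}(x_t|x₁). -/
/-- Kronecker delta `δ_a(b)`. -/
def kdelta {S : Type*} [DecidableEq S] (a b : S) : ℝ := if b = a then 1 else 0

/-- Masked diffusion kernel `p_{t|r}(x_t|x_r) = (κ_t/κ_r)δ_{x_r}(x_t) +
(1 − κ_t/κ_r)δ_M(x_t)` (with `κ_1 = 1` this includes `p_{t|1}` and `p_{r|1}`). -/
noncomputable def maskedKernel {S : Type*} [DecidableEq S] (M : S) (κ : ℝ → ℝ)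
    (t r : ℝ) (x_t x_r : S) : ℝ :=
  (κ t / κ r) * kdelta x_r x_t + (1 - κ t / κ r) * kdelta M x_t

/-!
Given `x₁ ≠ M`, the observation `x_t` is either `x₁` or `M`. If `x_t = x₁` the posterior of
`x_r` is `δ_{x₁}`, where the rate `δ_{x_r} − δ_{x_t}` vanishes. If `x_t = M` the posterior is
`((κ_r − κ_t) δ_{x₁} + (1 − κ_r) δ_M) / (1 − κ_t)`; the `δ_M` part again meets a vanishing rate,
and the weight `κ_r − κ_t` of the `δ_{x₁}` part cancels the denominator of `u_{t|r}`.
-/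

section MaskedKernel

variable {S : Type*} [DecidableEq S] {M : S} {κ : ℝ → ℝ} {t r : ℝ}

lemma sum_kdelta_mul [Fintype S] (a : S) (f : S → ℝ) : ∑ x, kdelta a x * f x = f a := by
  simp [kdelta]

lemma maskedKernel_self {x : S} (hx : x ≠ M) : maskedKernel M κ t r x x = κ t / κ r := by
  simp [maskedKernel, kdelta, hx]

lemma maskedKernel_mask_mask : maskedKernel M κ t r M M = 1 := by
  simp [maskedKernel, kdelta]

lemma maskedKernel_mask_of_ne {x : S} (hx : x ≠ M) : maskedKernel M κ t r M x = 1 - κ t / κ r := by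
  simp [maskedKernel, kdelta, hx.symm]

lemma maskedKernel_of_ne_of_ne {x y : S} (hxy : x ≠ y) (hx : x ≠ M) :
    maskedKernel M κ t r x y = 0 := by
  simp [maskedKernel, kdelta, hxy, hx]

lemma eq_or_eq_mask_of_maskedKernel_ne_zero {x y : S} (h : maskedKernel M κ t r x y ≠ 0) :
    x = y ∨ x = M := by
  by_contra! hne
  exact h (maskedKernel_of_ne_of_ne hne.1 hne.2)

end MaskedKernel

/-- The posterior `p_{r|1,t}(x_r|x₁,x_t)`. -/
noncomputable def maskedPosterior {S : Type*} [DecidableEq S] (M : S) (κ : ℝ → ℝ) (t r : ℝ)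
    (x₁ x_t x_r : S) : ℝ :=
  maskedKernel M κ t r x_t x_r * maskedKernel M κ r 1 x_r x₁ / maskedKernel M κ t 1 x_t x₁

section MaskedPosterior

variable {S : Type*} [DecidableEq S] {M : S} {κ : ℝ → ℝ} {t r : ℝ} {x₁ : S}

lemma maskedPosterior_unmasked (hκ1 : κ 1 = 1) (hκr : κ r ≠ 0) (hκt : κ t ≠ 0) (hx₁ : x₁ ≠ M)
    (x_r : S) : maskedPosterior M κ t r x₁ x₁ x_r = kdelta x₁ x_r := by
  unfold maskedPosterior
  by_cases h₁ : x_r = x₁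
  · subst h₁
    simp only [maskedKernel_self hx₁, hκ1, div_one, kdelta, if_pos]
    field_simp
  · rw [show kdelta x₁ x_r = 0 from if_neg h₁]
    by_cases hM : x_r = M
    · rw [hM, maskedKernel_of_ne_of_ne hx₁ hx₁, zero_mul, zero_div]
    · rw [maskedKernel_of_ne_of_ne h₁ hM, mul_zero, zero_div]

lemma maskedPosterior_masked (hκ1 : κ 1 = 1) (hκr : κ r ≠ 0) (hx₁ : x₁ ≠ M) (x_r : S) :
    maskedPosterior M κ t r x₁ M x_r =
      (κ r - κ t) / (1 - κ t) * kdelta x₁ x_r + (1 - κ r) / (1 - κ t) * kdelta M x_r := by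
  unfold maskedPosterior
  by_cases h₁ : x_r = x₁
  · subst h₁
    simp only [maskedKernel_mask_of_ne hx₁, maskedKernel_self hx₁, hκ1, div_one, kdelta, if_pos,
      if_neg hx₁]
    field_simp
    ring
  by_cases hM : x_r = M
  · subst hM
    simp only [maskedKernel_mask_mask, maskedKernel_mask_of_ne hx₁, hκ1, div_one, kdelta, if_pos,
      if_neg hx₁.symm]
    ring
  · rw [maskedKernel_of_ne_of_ne h₁ hM]
    simp [kdelta, h₁, hM]

end MaskedPosterior

theorem masked_rate_marginal_consistency_general
    {S : Type*} [Fintype S] [DecidableEq S] (M : S)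
    (κ κ' : ℝ → ℝ)
    (hκ_mono : MonotoneOn κ (Set.Icc 0 1))
    (hκ0 : κ 0 = 0) (hκ1 : κ 1 = 1)
    (t r : ℝ) (ht : 0 ≤ t) (htr : t < r) (hr1 : r ≤ 1)
    (hκtr : κ t < κ r)
    (x₁ : S) (hx₁ : x₁ ≠ M)
    (x_t : S) (hsupp : 0 < maskedKernel M κ t 1 x_t x₁) :
    ∀ y : S,
      ∑ x_r : S,
          (maskedKernel M κ t r x_t x_r * maskedKernel M κ r 1 x_r x₁ /
              maskedKernel M κ t 1 x_t x₁) *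
            ((κ' t / (κ r - κ t)) * (kdelta x_r y - kdelta x_t y)) =
        (κ' t / (1 - κ t)) * (kdelta x₁ y - kdelta x_t y) := by
  intro y
  change ∑ x_r, maskedPosterior M κ t r x₁ x_t x_r * _ = _
  have hκt : 0 ≤ κ t := hκ0 ▸ hκ_mono ⟨le_rfl, zero_le_one⟩ ⟨ht, htr.le.trans hr1⟩ ht
  have hκr : κ r ≠ 0 := (hκt.trans_lt hκtr).ne'
  rcases eq_or_eq_mask_of_maskedKernel_ne_zero hsupp.ne' with rfl | rfl
  · rw [maskedKernel_self hx₁, hκ1, div_one] at hsupp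
    simp_rw [maskedPosterior_unmasked hκ1 hκr hsupp.ne' hx₁, sum_kdelta_mul, sub_self, mul_zero]
  · simp_rw [maskedPosterior_masked hκ1 hκr hx₁, add_mul, Finset.sum_add_distrib, mul_assoc,
      ← Finset.mul_sum, sum_kdelta_mul, sub_self, mul_zero, add_zero]
    field_simp [sub_ne_zero.2 hκtr.ne']

/-- marginal consistency of the masked-diffusion conditional rate matrices
`u_{t|r}(y,x|x_r) = (κ̇_t/(κ_r−κ_t))(δ_{x_r}(y) − δ_x(y))`: for any `x₁ ≠ M` and `x_t` in the
support of `p_{t|1}(·|x₁)`, the expectation of `u_{t|r}(y, x_t|·)` under the posterior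
`p_{r|1,t}(x_r|x₁,x_t) = p_{t|r}(x_t|x_r)p_{r|1}(x_r|x₁)/p_{t|1}(x_t|x₁)` equals
`u_{t|1}(y, x_t|x₁) = (κ̇_t/(1−κ_t))(δ_{x₁}(y) − δ_{x_t}(y))`. -/
theorem masked_rate_marginal_consistency
    {S : Type*} [Fintype S] [DecidableEq S] (M : S)
    (κ κ' : ℝ → ℝ) (hderiv : ∀ u, HasDerivAt κ (κ' u) u)
    (hκ_mono : MonotoneOn κ (Set.Icc 0 1))
    (hκ0 : κ 0 = 0) (hκ1 : κ 1 = 1)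
    (t r : ℝ) (ht : 0 ≤ t) (htr : t < r) (hr1 : r ≤ 1)
    (hκtr : κ t < κ r) (hκt1 : κ t < 1)
    (x₁ : S) (hx₁ : x₁ ≠ M)
    (x_t : S) (hsupp : 0 < maskedKernel M κ t 1 x_t x₁) :
    ∀ y : S,
      ∑ x_r : S,
          (maskedKernel M κ t r x_t x_r * maskedKernel M κ r 1 x_r x₁ /
              maskedKernel M κ t 1 x_t x₁) *
            ((κ' t / (κ r - κ t)) * (kdelta x_r y - kdelta x_t y)) =
        (κ' t / (1 - κ t)) * (kdelta x₁ y - kdelta x_t y) :=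
  masked_rate_marginal_consistency_general M κ κ' hκ_mono hκ0 hκ1 t r ht htr hr1 hκtr x₁ hx₁ x_t
    hsupp
end
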